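/- There exists a unique formal power series a(z) = 1 + Σ_{k≥1} a_k z^{-(r+1)k} satisfying S_z^r a(z) = (−z)^r a(z), where the equation is understood coefficientwise in the ring of formal Laurent series. -/

import Mathlib

/-!
Write `a(z) = Σ_n a_n z^{-(r+1)n}`. Then `S_z^r a` is supported on the exponents `-((r+1)n - r)`,
and its coefficient there minus `(-1)^r a_n` involves only `a_{n-1}, …, a_{n-r}`, the first of
them with the factor `(-1)^(r+1) r (r+1) (1 - n)`. This factor vanishes only for `n = 1`, so the
equation is a triangular recursion fixing each `a_{n-1}`, `n ≥ 2`, from the earlier coefficients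
and `a_0 = 1`.
-/

open HahnSeries Pointwise

/-- The operator `S_z = z^{1-r} ∂_z - (r-1)/(2 z^r) - z` acting on formal Laurent
series with finitely many positive powers of `z`, written in the variable
`t = z⁻¹` (so `coeff m` is the coefficient of `z^{-m}`). -/
noncomputable def Sop (r : ℕ) (f : LaurentSeries ℂ) : LaurentSeries ℂ where
  coeff m := ((r + 1 : ℂ) / 2 - m) * f.coeff (m - r) - f.coeff (m + 1)
  isPWO_support' := by
    have h : (Function.support fun m : ℤ =>
        ((r + 1 : ℂ) / 2 - m) * f.coeff (m - r) - f.coeff (m + 1))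
        ⊆ (f.support + {(r : ℤ)}) ∪ (f.support + ({(-1 : ℤ)} : Set ℤ)) := by
      intro m hm
      simp only [Function.mem_support] at hm
      by_cases h1 : f.coeff (m - (r : ℤ)) = 0
      · have h2 : f.coeff (m + 1) ≠ 0 := fun h2 => hm (by rw [h1, h2]; ring)
        right
        exact Set.mem_add.mpr ⟨m + 1, by simpa using h2, -1, rfl, by ring⟩
      · left
        exact Set.mem_add.mpr ⟨m - r, by simpa using h1, r, rfl, by ring⟩
    exact ((f.isPWO_support.add (Set.isPWO_singleton (r : ℤ))).union
      (f.isPWO_support.add (Set.isPWO_singleton (-1 : ℤ)))).mono h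

/-- The formal adjoint `S_z^⋆ = -z^{1-r} ∂_z + (r-1)/(2 z^r) - z`. -/
noncomputable def Sstar (r : ℕ) (f : LaurentSeries ℂ) : LaurentSeries ℂ where
  coeff m := ((m : ℂ) - (r + 1) / 2) * f.coeff (m - r) - f.coeff (m + 1)
  isPWO_support' := by
    have h : (Function.support fun m : ℤ =>
        ((m : ℂ) - (r + 1) / 2) * f.coeff (m - r) - f.coeff (m + 1))
        ⊆ (f.support + {(r : ℤ)}) ∪ (f.support + ({(-1 : ℤ)} : Set ℤ)) := by
      intro m hm
      simp only [Function.mem_support] at hm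
      by_cases h1 : f.coeff (m - (r : ℤ)) = 0
      · have h2 : f.coeff (m + 1) ≠ 0 := fun h2 => hm (by rw [h1, h2]; ring)
        right
        exact Set.mem_add.mpr ⟨m + 1, by simpa using h2, -1, rfl, by ring⟩
      · left
        exact Set.mem_add.mpr ⟨m - r, by simpa using h1, r, rfl, by ring⟩
    exact ((f.isPWO_support.add (Set.isPWO_singleton (r : ℤ))).union
      (f.isPWO_support.add (Set.isPWO_singleton (-1 : ℤ)))).mono h

/-- Substitution `z ↦ ω z` on a formal Laurent series (`coeff m` is the
coefficient of `z^{-m}`, which gets multiplied by `ω^{-m}`). -/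
noncomputable def rot (ω : ℂ) (f : LaurentSeries ℂ) : LaurentSeries ℂ where
  coeff m := ω ^ (-m) * f.coeff m
  isPWO_support' := f.isPWO_support.mono (fun m hm => by
    simp only [Function.mem_support] at hm ⊢
    exact fun h => hm (by rw [h, mul_zero]))

theorem indicator_Iic_eq_zero {M : Type*} [Zero M] {a : ℤ → M} (ha : ∀ n < 0, a n = 0) {N : ℤ}
    (hN : N < 0) : (Set.Iic N).indicator a = 0 :=
  funext fun m => Set.indicator_apply_eq_zero.2 fun hm => ha m (lt_of_le_of_lt hm hN)

section Triangular

variable {K : Type*} [Field K]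

noncomputable def triangularSolution (Φ : (ℤ → K) → ℤ → K) (β : ℤ → K) (n : ℤ) : K :=
  if n ≤ 0 then if n = 0 then 1 else 0
  else -Φ (fun m => if m < n then triangularSolution Φ β m else 0) (n + 1) / β (n + 1)
termination_by n.toNat

variable {Φ : (ℤ → K) → ℤ → K} {β : ℤ → K}

theorem triangularSolution_of_pos {n : ℤ} (hn : 0 < n) :
    triangularSolution Φ β n =
      -Φ ((Set.Iic (n - 1)).indicator (triangularSolution Φ β)) (n + 1) / β (n + 1) := by
  rw [triangularSolution, if_neg (not_le.2 hn)]
  congr 3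
  ext m
  simp only [Set.indicator_apply, Set.mem_Iic, Int.le_sub_one_iff]

variable (hsplit : ∀ a n, Φ a n = β n * a (n - 1) + Φ ((Set.Iic (n - 2)).indicator a) n)
include hsplit

theorem triangularSolution_spec (hβ : ∀ n, 2 ≤ n → β n ≠ 0) (hβ₁ : β 1 = 0)
    (hΦ₀ : ∀ n, Φ 0 n = 0) :
    (triangularSolution Φ β 0 = 1 ∧ ∀ n < 0, triangularSolution Φ β n = 0) ∧
      ∀ n, Φ (triangularSolution Φ β) n = 0 := by
  have hs_neg : ∀ n < 0, triangularSolution Φ β n = 0 := fun n hn => by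
    simp [triangularSolution, hn.le, hn.ne]
  refine ⟨⟨by simp [triangularSolution], hs_neg⟩, fun n => ?_⟩
  rw [hsplit]
  rcases lt_or_ge n 2 with hn | hn
  · rw [indicator_Iic_eq_zero hs_neg (by omega), hΦ₀, add_zero]
    obtain rfl | hn : n = 1 ∨ n < 1 := by omega
    · rw [hβ₁, zero_mul]
    · rw [hs_neg _ (by omega), mul_zero]
  · rw [triangularSolution_of_pos (by omega : 0 < n - 1), sub_sub, sub_add_cancel,
      one_add_one_eq_two]
    field_simp [hβ n hn]
    ring

theorem eq_of_triangular (hβ : ∀ n, 2 ≤ n → β n ≠ 0) {a b : ℤ → K}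
    (ha : (a 0 = 1 ∧ ∀ n < 0, a n = 0) ∧ ∀ n, Φ a n = 0)
    (hb : (b 0 = 1 ∧ ∀ n < 0, b n = 0) ∧ ∀ n, Φ b n = 0) : a = b := by
  obtain ⟨⟨ha0, ha_neg⟩, ha⟩ := ha
  obtain ⟨⟨hb0, hb_neg⟩, hb⟩ := hb
  have h_le : ∀ k : ℕ, ∀ m ≤ (k : ℤ), a m = b m := by
    intro k
    induction k with
    | zero =>
      intro m hm
      obtain rfl | hm := eq_or_lt_of_le hm
      · rw [Nat.cast_zero, ha0, hb0]
      · rw [ha_neg m hm, hb_neg m hm]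
    | succ k ih =>
      have hβk := hβ (k + 2) (by omega)
      have hk : β (k + 2) * a (k + 1) = β (k + 2) * b (k + 1) := by
        have h := (ha (k + 2)).trans (hb (k + 2)).symm
        have h_ind : (Set.Iic (k : ℤ)).indicator a = (Set.Iic (k : ℤ)).indicator b :=
          Set.indicator_congr fun m hm => ih m hm
        rwa [hsplit a, hsplit b, add_sub_cancel_right, h_ind, add_left_inj,
          show (k : ℤ) + 2 - 1 = k + 1 by ring] at h
      intro m hm
      obtain hm | rfl : m ≤ k ∨ m = k + 1 := by push_cast at hm; omega
      · exact ih m hm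
      · exact mul_left_cancel₀ hβk hk
  ext n
  rcases lt_or_ge n 0 with hn | hn
  · rw [ha_neg n hn, hb_neg n hn]
  · exact h_le n.toNat n (by omega)

theorem existsUnique_of_triangular (hβ : ∀ n, 2 ≤ n → β n ≠ 0) (hβ₁ : β 1 = 0)
    (hΦ₀ : ∀ n, Φ 0 n = 0) :
    ∃! a : ℤ → K, (a 0 = 1 ∧ ∀ n < 0, a n = 0) ∧ ∀ n, Φ a n = 0 :=
  ⟨_, triangularSolution_spec hsplit hβ hβ₁ hΦ₀,
    fun _ ha => eq_of_triangular hsplit hβ ha (triangularSolution_spec hsplit hβ hβ₁ hΦ₀)⟩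

end Triangular

/-- The coefficient of `z^{-((r+1)n - j)}` in `S_z^j (Σ_n a n z^{-(r+1)n})`. -/
noncomputable def iterCoeff (r : ℕ) (a : ℤ → ℂ) : ℕ → ℤ → ℂ
  | 0, n => a n
  | j + 1, n => (((r : ℂ) + 1) / 2 - (((r : ℤ) + 1) * n - (j + 1) : ℤ)) * iterCoeff r a j (n - 1)
      - iterCoeff r a j n

/-- `(-1)^(j+1)` times the sum of the first `j` factors in `iterCoeff`. -/
noncomputable def subLeading (r j : ℕ) (n : ℤ) : ℂ :=
  (-1) ^ (j + 1) * (j * (((r : ℂ) + 1) / 2 - n * ((r : ℂ) + 1) + 1) + j * ((j : ℂ) - 1) / 2)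

section iterCoeff

variable {r : ℕ}

theorem iterCoeff_add (a b : ℤ → ℂ) :
    ∀ (j : ℕ) (n : ℤ), iterCoeff r (a + b) j n = iterCoeff r a j n + iterCoeff r b j n
  | 0, n => rfl
  | j + 1, n => by
    rw [iterCoeff, iterCoeff, iterCoeff, iterCoeff_add a b j, iterCoeff_add a b j]
    ring

theorem iterCoeff_of_eq_zero {a : ℤ → ℂ} :
    ∀ (j : ℕ) (n : ℤ), (∀ m ∈ Set.Ico (n - j) n, a m = 0) → iterCoeff r a j n = (-1) ^ j * a n
  | 0, n, _ => by rw [iterCoeff, pow_zero, one_mul]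
  | j + 1, n, h => by
    have hn : a (n - 1) = 0 := h _ ⟨by push_cast; omega, by omega⟩
    rw [iterCoeff,
      iterCoeff_of_eq_zero j (n - 1) fun m ⟨h₁, h₂⟩ => h m ⟨by push_cast; omega, by omega⟩,
      iterCoeff_of_eq_zero j n fun m ⟨h₁, h₂⟩ => h m ⟨by push_cast; omega, h₂⟩, hn]
    ring

theorem iterCoeff_of_eq_zero_of_lt_sub_one {a : ℤ → ℂ} :
    ∀ (j : ℕ) (n : ℤ), (∀ m ∈ Set.Ico (n - j) (n - 1), a m = 0) →
      iterCoeff r a j n = (-1) ^ j * a n + subLeading r j n * a (n - 1)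
  | 0, n, _ => by simp [iterCoeff, subLeading]
  | j + 1, n, h => by
    rw [iterCoeff,
      iterCoeff_of_eq_zero j (n - 1) fun m ⟨h₁, h₂⟩ => h m ⟨by push_cast; omega, h₂⟩,
      iterCoeff_of_eq_zero_of_lt_sub_one j n fun m ⟨h₁, h₂⟩ => h m ⟨by push_cast; omega, h₂⟩,
      subLeading, subLeading]
    push_cast
    ring

theorem iterCoeff_split (a : ℤ → ℂ) (j : ℕ) (n : ℤ) :
    iterCoeff r a j n = (-1) ^ j * a n + subLeading r j n * a (n - 1)
      + iterCoeff r ((Set.Iic (n - 2)).indicator a) j n := by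
  conv_lhs => rw [← (Set.Iic (n - 2)).indicator_compl_add_self a]
  rw [iterCoeff_add, iterCoeff_of_eq_zero_of_lt_sub_one j n fun m ⟨_, hm⟩ =>
      Set.indicator_of_notMem (Set.notMem_compl_iff.2 (Set.mem_Iic.2 (by omega))) a]
  simp [Set.indicator_of_mem]

end iterCoeff

theorem subLeading_self (r : ℕ) (n : ℤ) :
    subLeading r r n = (-1) ^ (r + 1) * r * ((r : ℂ) + 1) * (1 - n) := by
  rw [subLeading]
  ring

theorem subLeading_self_ne_zero {r : ℕ} (hr : r ≠ 0) {n : ℤ} (hn : n ≠ 1) :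
    subLeading r r n ≠ 0 := by
  rw [subLeading_self]
  have hn' : (1 : ℂ) - n ≠ 0 := sub_ne_zero.2 (by exact_mod_cast hn.symm)
  have hr' : (r : ℂ) + 1 ≠ 0 := by exact_mod_cast r.succ_ne_zero
  exact mul_ne_zero (mul_ne_zero (mul_ne_zero (pow_ne_zero _ (neg_ne_zero.2 one_ne_zero))
    (Nat.cast_ne_zero.2 hr)) hr') hn'

noncomputable def latticeDefect (r : ℕ) (a : ℤ → ℂ) (n : ℤ) : ℂ :=
  iterCoeff r a r n - (-1) ^ r * a n

theorem latticeDefect_split (r : ℕ) (a : ℤ → ℂ) (n : ℤ) :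
    latticeDefect r a n = subLeading r r n * a (n - 1)
      + latticeDefect r ((Set.Iic (n - 2)).indicator a) n := by
  rw [latticeDefect, latticeDefect, iterCoeff_split,
    Set.indicator_of_notMem (Set.notMem_Iic.2 (by omega) : n ∉ Set.Iic (n - 2))]
  ring

theorem latticeDefect_zero (r : ℕ) (n : ℤ) : latticeDefect r 0 n = 0 := by
  simp [latticeDefect, iterCoeff_of_eq_zero]

theorem Sop_coeff (r : ℕ) (f : LaurentSeries ℂ) (m : ℤ) :
    (Sop r f).coeff m = (((r : ℂ) + 1) / 2 - m) * f.coeff (m - r) - f.coeff (m + 1) := rfl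

theorem coeff_iterate_Sop (r : ℕ) (A : LaurentSeries ℂ) :
    ∀ (j : ℕ) (n : ℤ), ((Sop r)^[j] A).coeff (((r : ℤ) + 1) * n - j)
      = iterCoeff r (fun i => A.coeff (((r : ℤ) + 1) * i)) j n
  | 0, n => by simp [iterCoeff]
  | j + 1, n => by
    have e₁ : ((r : ℤ) + 1) * n - ((j + 1 : ℕ) : ℤ) - r = ((r : ℤ) + 1) * (n - 1) - j := by
      push_cast; ring
    have e₂ : ((r : ℤ) + 1) * n - ((j + 1 : ℕ) : ℤ) + 1 = ((r : ℤ) + 1) * n - j := by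
      push_cast; ring
    rw [Function.iterate_succ_apply', Sop_coeff, e₁, e₂, coeff_iterate_Sop r A j,
      coeff_iterate_Sop r A j, iterCoeff]
    push_cast
    ring

theorem dvd_of_coeff_iterate_Sop_ne_zero {r : ℕ} {A : LaurentSeries ℂ}
    (hA : ∀ m, A.coeff m ≠ 0 → ((r : ℤ) + 1) ∣ m) :
    ∀ (j : ℕ) (m : ℤ), ((Sop r)^[j] A).coeff m ≠ 0 → ((r : ℤ) + 1) ∣ m + j
  | 0, m, h => by simpa using hA m h
  | j + 1, m, h => by
    rw [Function.iterate_succ_apply', Sop_coeff] at h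
    by_cases h₁ : ((Sop r)^[j] A).coeff (m - r) = 0
    · rw [h₁, mul_zero, zero_sub, neg_ne_zero] at h
      have := dvd_of_coeff_iterate_Sop_ne_zero hA j (m + 1) h
      rwa [Nat.cast_succ, add_comm (j : ℤ), ← add_assoc]
    · have := dvd_of_coeff_iterate_Sop_ne_zero hA j (m - r) h₁
      rw [show m + ((j + 1 : ℕ) : ℤ) = m - r + j + (r + 1) by push_cast; ring]
      exact dvd_add this dvd_rfl

theorem iterate_Sop_eq_iff {r : ℕ} {A : LaurentSeries ℂ}
    (hA : ∀ m, A.coeff m ≠ 0 → ((r : ℤ) + 1) ∣ m) :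
    (Sop r)^[r] A = ((-1 : ℂ) ^ r) • (HahnSeries.single (-(r : ℤ)) 1 * A) ↔
      ∀ n, latticeDefect r (fun i => A.coeff (((r : ℤ) + 1) * i)) n = 0 := by
  have hrhs : ∀ m, (((-1 : ℂ) ^ r) • (HahnSeries.single (-(r : ℤ)) 1 * A)).coeff m
      = (-1) ^ r * A.coeff (m + r) := fun m => by
    rw [HahnSeries.coeff_smul, coeff_single_mul, one_mul, sub_neg_eq_add, smul_eq_mul]
  constructor
  · intro h n
    have hn := congrArg (HahnSeries.coeff · (((r : ℤ) + 1) * n - r)) h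
    simp only [coeff_iterate_Sop, hrhs, sub_add_cancel] at hn
    rw [latticeDefect, hn, sub_self]
  · intro h
    ext m
    rw [hrhs]
    by_cases hm : ((r : ℤ) + 1) ∣ m + r
    · obtain ⟨n, hn⟩ := hm
      rw [show m = ((r : ℤ) + 1) * n - r by omega, coeff_iterate_Sop, sub_add_cancel,
        ← sub_eq_zero]
      exact h n
    · rw [not_ne_iff.1 (mt (dvd_of_coeff_iterate_Sop_ne_zero hA r m) hm),
        not_ne_iff.1 (mt (hA _) hm), mul_zero]

noncomputable def latticeSeries (r : ℕ) (s : ℤ → ℂ) (hs : BddBelow s.support) :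
    LaurentSeries ℂ :=
  embDomain (OrderEmbedding.ofStrictMono (((r : ℤ) + 1) * ·)
    (strictMono_mul_left_of_pos (by positivity))) (ofSuppBddBelow s hs)

section latticeSeries

variable {r : ℕ} {s : ℤ → ℂ} (hs : BddBelow s.support)

theorem coeff_latticeSeries_mul (n : ℤ) :
    (latticeSeries r s hs).coeff (((r : ℤ) + 1) * n) = s n :=
  embDomain_coeff (f := OrderEmbedding.ofStrictMono _ _)

theorem dvd_of_coeff_latticeSeries_ne_zero (m : ℤ) (hm : (latticeSeries r s hs).coeff m ≠ 0) :
    ((r : ℤ) + 1) ∣ m := by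
  by_contra h
  exact hm (embDomain_of_notMem_range fun ⟨n, hn⟩ => h ⟨n, hn.symm⟩)

end latticeSeries

theorem eq_of_coeff_mul_eq {r : ℕ} {A B : LaurentSeries ℂ}
    (hA : ∀ m, A.coeff m ≠ 0 → ((r : ℤ) + 1) ∣ m) (hB : ∀ m, B.coeff m ≠ 0 → ((r : ℤ) + 1) ∣ m)
    (h : ∀ n, A.coeff (((r : ℤ) + 1) * n) = B.coeff (((r : ℤ) + 1) * n)) : A = B := by
  ext m
  by_cases hm : ((r : ℤ) + 1) ∣ m
  · obtain ⟨n, rfl⟩ := hm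
    exact h n
  · rw [not_ne_iff.1 (mt (hA m) hm), not_ne_iff.1 (mt (hB m) hm)]

theorem forall_coeff_ne_zero_eq_nat_mul_iff {r : ℕ} (A : LaurentSeries ℂ) :
    (∀ m, A.coeff m ≠ 0 → ∃ k : ℕ, m = ((r : ℤ) + 1) * k) ↔
      (∀ m, A.coeff m ≠ 0 → ((r : ℤ) + 1) ∣ m) ∧ ∀ n < 0, A.coeff (((r : ℤ) + 1) * n) = 0 := by
  constructor
  · intro h
    refine ⟨fun m hm => ?_, fun n hn => by_contra fun hA => ?_⟩
    · obtain ⟨k, hk⟩ := h m hm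
      exact ⟨k, hk⟩
    · obtain ⟨k, hk⟩ := h _ hA
      have : n = k := mul_left_cancel₀ (by omega) hk
      omega
  · rintro ⟨hdvd, hneg⟩ m hm
    obtain ⟨n, rfl⟩ := hdvd m hm
    refine ⟨n.toNat, ?_⟩
    rw [Int.toNat_of_nonneg (not_lt.1 fun hn => hm (hneg n hn))]

/-- There exists a unique formal series `a(z) = 1 + Σ_{k≥1} a_k z^{-(r+1)k}`
with `S_z^r a = (-z)^r a`.  (`coeff m` is the coefficient of `z^{-m}`, so the
support condition reads `m = (r+1)k`, `k ∈ ℕ`, and `(-z)^r a = (-1)^r z^r a`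
with `z^r = single (-r) 1`.) -/
theorem exists_unique_a (r : ℕ) (hr : 2 ≤ r) :
    ∃! a : LaurentSeries ℂ,
      (a.coeff 0 = 1 ∧ ∀ m : ℤ, a.coeff m ≠ 0 → ∃ k : ℕ, m = ((r : ℤ) + 1) * k) ∧
      (Sop r)^[r] a = ((-1 : ℂ) ^ r) • (HahnSeries.single (-(r : ℤ)) 1 * a) := by
  obtain ⟨s, ⟨⟨hs0, hs_neg⟩, hs⟩, hs_unique⟩ := existsUnique_of_triangular
    (latticeDefect_split r) (fun n hn => subLeading_self_ne_zero (by omega) (by omega))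
    (by simp [subLeading_self]) (latticeDefect_zero r)
  have hbdd : BddBelow s.support := ⟨0, fun n hn => not_lt.1 fun h => hn (hs_neg n h)⟩
  have hA := dvd_of_coeff_latticeSeries_ne_zero (r := r) hbdd
  refine ⟨latticeSeries r s hbdd, ⟨⟨?_, ?_⟩, ?_⟩, ?_⟩
  · simpa [hs0] using coeff_latticeSeries_mul (r := r) hbdd 0
  · exact (forall_coeff_ne_zero_eq_nat_mul_iff _).2
      ⟨hA, fun n hn => by rw [coeff_latticeSeries_mul, hs_neg n hn]⟩
  · simpa only [iterate_Sop_eq_iff hA, coeff_latticeSeries_mul] using hs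
  · rintro b ⟨⟨hb0, hb⟩, hbeq⟩
    obtain ⟨hb, hb_neg⟩ := (forall_coeff_ne_zero_eq_nat_mul_iff b).1 hb
    refine eq_of_coeff_mul_eq hb hA fun n => ?_
    rw [coeff_latticeSeries_mul, ← hs_unique _ ⟨⟨by simpa using hb0, hb_neg⟩,
      (iterate_Sop_eq_iff hb).1 hbeq⟩]
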